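/- For the Besov-type spaces with norms ‖f‖_B = Σ_k e^{|k|/2}(∫_{I_k}‖f(y)‖²dy/y²)^{1/2} and ‖u‖_{B*} = (sup_{R>e} (1/log R)∫_{1/R}^R ‖u(y)‖² dy/y²)^{1/2}, and the weighted space L^{2,s} with norm (∫₀^∞(1+|log y|)^{2s}‖u(y)‖² dy/y²)^{1/2}, the inclusions L^{2,s} ⊂ B and B* ⊂ L^{2,-s} hold continuously for every s > 1/2. -/

import Mathlib

/-!
On `I_k = (bd (k-1), bd k]` the logarithmic weight satisfies `1 + |log y| ≥ e^{|k|-1}`, and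
`I_k ⊆ (1/R_k, R_k]` with `log R_k = e^{|k|+1}`. Hence the `L²(dy/y²)` mass of a function
on `I_k` is at most `e^{-2s(|k|-1)}` times its weighted `L^{2,s}` mass there, and at most
`e^{|k|+1} ‖u‖²_{B*}`. Summing over `k` (by Cauchy–Schwarz for `‖·‖_B`) leaves the
constant `Σ_k e^{(1-2s)|k| + 2s + 1}`, which is finite exactly when `s > 1/2`.
-/

open MeasureTheory ENNReal

/-- The dyadic-exponential partition points of `(0,∞)`:
`bd j = exp(e^j)` for `j ≥ 0` and `bd j = exp(-e^{-j-1})` for `j ≤ -1`, so that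
`I_k = (bd (k-1), bd k]` are the intervals of the Besov decomposition. -/
noncomputable def bd (j : ℤ) : ℝ :=
  if 0 ≤ j then Real.exp (Real.exp j) else Real.exp (-Real.exp (-(j : ℝ) - 1))

/-- The Besov norm `‖f‖_B = Σ_k e^{|k|/2} (∫_{I_k} ‖f(y)‖² dy/y²)^{1/2}`. -/
noncomputable def Bnorm {E : Type*} [NormedAddCommGroup E] (f : ℝ → E) : ℝ≥0∞ :=
  ∑' k : ℤ, ENNReal.ofReal (Real.exp ((|k| : ℤ) / 2 : ℝ)) *
    (∫⁻ y in Set.Ioc (bd (k - 1)) (bd k),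
        ((‖f y‖₊ : ℝ≥0∞)) ^ 2 / ENNReal.ofReal (y ^ 2)) ^ ((1 : ℝ) / 2)

/-- The dual Besov norm
`‖u‖_{B*} = (sup_{R>e} (1/log R) ∫_{1/R}^R ‖u(y)‖² dy/y²)^{1/2}`. -/
noncomputable def Bstarnorm {E : Type*} [NormedAddCommGroup E] (u : ℝ → E) : ℝ≥0∞ :=
  (⨆ R : {R : ℝ // Real.exp 1 < R},
      ENNReal.ofReal (1 / Real.log R) *
        ∫⁻ y in Set.Ioc (1 / (R : ℝ)) (R : ℝ),
          ((‖u y‖₊ : ℝ≥0∞)) ^ 2 / ENNReal.ofReal (y ^ 2)) ^ ((1 : ℝ) / 2)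

/-- The weighted norm `‖u‖_s = (∫₀^∞ (1+|log y|)^{2s} ‖u(y)‖² dy/y²)^{1/2}`. -/
noncomputable def Lnorm {E : Type*} [NormedAddCommGroup E] (s : ℝ) (f : ℝ → E) : ℝ≥0∞ :=
  (∫⁻ y in Set.Ioi (0 : ℝ),
      ENNReal.ofReal ((1 + |Real.log y|) ^ (2 * s)) *
        ((‖f y‖₊ : ℝ≥0∞)) ^ 2 / ENNReal.ofReal (y ^ 2)) ^ ((1 : ℝ) / 2)

lemma bd_pos (j : ℤ) : 0 < bd j := by
  unfold bd; split <;> exact Real.exp_pos _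

lemma log_bd (j : ℤ) :
    Real.log (bd j) = if 0 ≤ j then Real.exp j else -Real.exp (-(j : ℝ) - 1) := by
  unfold bd; split <;> exact Real.log_exp _

lemma monotone_log_bd : Monotone fun j => Real.log (bd j) := by
  refine monotone_int_of_le_succ fun j => ?_
  simp only [log_bd]
  rcases lt_trichotomy j (-1) with hj | rfl | hj
  · rw [if_neg (by omega), if_neg (by omega)]
    gcongr
    linarith
  · norm_num
  · rw [if_pos (by omega), if_pos (by omega)]
    gcongr
    linarith

lemma monotone_bd : Monotone bd := fun i j hij =>
  (Real.log_le_log_iff (bd_pos i) (bd_pos j)).1 (monotone_log_bd hij)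

lemma bd_le_exp {j : ℤ} (hj : j < 0) : bd j ≤ Real.exp j := by
  rw [bd, if_neg hj.not_ge]
  have := Real.add_one_le_exp (-(j : ℝ) - 1)
  gcongr
  linarith

lemma exp_le_bd {j : ℤ} (hj : 0 ≤ j) : Real.exp j ≤ bd j := by
  rw [bd, if_pos hj]
  have := Real.add_one_le_exp (j : ℝ)
  gcongr
  linarith

lemma Monotone.exists_mem_Ioc_sub_one {α : Type*} [LinearOrder α] {f : ℤ → α}
    (hf : Monotone f) {x : α} (hlow : ∃ j, f j < x) (hhigh : ∃ k, x ≤ f k) :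
    ∃ k, x ∈ Set.Ioc (f (k - 1)) (f k) := by
  obtain ⟨j, hj⟩ := hlow
  have hbdd : ∀ k, x ≤ f k → j ≤ k := fun k hk =>
    le_of_not_gt fun hkj => (hk.trans (hf hkj.le)).not_gt hj
  obtain ⟨k, hk, hleast⟩ := Int.exists_least_of_bdd ⟨j, hbdd⟩ hhigh
  exact ⟨k, lt_of_not_ge fun h => (hleast _ h).not_gt (by omega), hk⟩

lemma iUnion_Ioc_bd : ⋃ k : ℤ, Set.Ioc (bd (k - 1)) (bd k) = Set.Ioi 0 := by
  ext y
  simp only [Set.mem_iUnion, Set.mem_Ioi]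
  refine ⟨fun ⟨k, hk, _⟩ => (bd_pos _).trans hk,
    fun hy => monotone_bd.exists_mem_Ioc_sub_one ?_ ?_⟩
  · obtain ⟨j, hj⟩ := exists_int_lt (min (-1) (Real.log y))
    have hj0 : j < 0 := Int.cast_lt_zero.1 ((hj.trans_le (min_le_left _ _)).trans (by norm_num))
    refine ⟨j, (bd_le_exp hj0).trans_lt ?_⟩
    rw [← Real.lt_log_iff_exp_lt hy]
    exact hj.trans_le (min_le_right _ _)
  · obtain ⟨k, hk⟩ := exists_int_gt (max 0 (Real.log y))
    have hk0 : 0 ≤ k := Int.cast_nonneg_iff.1 ((le_max_left _ _).trans hk.le)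
    refine ⟨k, le_trans ?_ (exp_le_bd hk0)⟩
    rw [← Real.log_le_iff_le_exp hy]
    exact (le_max_right _ _).trans hk.le

lemma lintegral_Ioi_zero_eq_tsum_Ioc_bd (g : ℝ → ℝ≥0∞) :
    ∫⁻ y in Set.Ioi 0, g y = ∑' k : ℤ, ∫⁻ y in Set.Ioc (bd (k - 1)) (bd k), g y := by
  have hdisj : Pairwise (Function.onFun Disjoint fun k : ℤ => Set.Ioc (bd (k - 1)) (bd k)) := by
    simpa only [Order.pred_eq_sub_one] using monotone_bd.pairwise_disjoint_on_Ioc_pred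
  rw [← iUnion_Ioc_bd, Measure.restrict_iUnion hdisj fun _ => measurableSet_Ioc,
    lintegral_sum_measure]

lemma exp_abs_sub_one_le_one_add_abs_log {k : ℤ} {y : ℝ}
    (hy : y ∈ Set.Ioc (bd (k - 1)) (bd k)) : Real.exp (|(k : ℝ)| - 1) ≤ 1 + |Real.log y| := by
  have hy0 : 0 < y := (bd_pos _).trans hy.1
  rcases lt_trichotomy k 0 with hk | rfl | hk
  · have hlog : Real.log y ≤ Real.log (bd k) := Real.log_le_log hy0 hy.2
    rw [log_bd, if_neg hk.not_ge] at hlog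
    rw [abs_of_neg (by exact_mod_cast hk)]
    linarith [neg_le_abs (Real.log y)]
  · have : Real.exp (-1) ≤ 1 := Real.exp_le_one_iff.2 (by norm_num)
    simp only [Int.cast_zero, abs_zero, zero_sub]
    linarith [abs_nonneg (Real.log y)]
  · have hlog : Real.log (bd (k - 1)) < Real.log y := Real.log_lt_log (bd_pos _) hy.1
    rw [log_bd, if_pos (by omega)] at hlog
    rw [abs_of_pos (by exact_mod_cast hk)]
    push_cast at hlog
    linarith [le_abs_self (Real.log y)]

lemma abs_log_bd_le (j : ℤ) : |Real.log (bd j)| ≤ Real.exp |(j : ℝ)| := by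
  rw [log_bd]
  split_ifs with hj
  · rw [abs_of_pos (Real.exp_pos _), abs_of_nonneg (by exact_mod_cast hj)]
  · rw [abs_neg, abs_of_pos (Real.exp_pos _), abs_of_neg (by exact_mod_cast not_le.1 hj)]
    gcongr
    linarith

lemma Ioc_bd_subset (k : ℤ) :
    Set.Ioc (bd (k - 1)) (bd k) ⊆
      Set.Ioc (1 / Real.exp (Real.exp (|(k : ℝ)| + 1)))
        (Real.exp (Real.exp (|(k : ℝ)| + 1))) := by
  have hlog : ∀ j : ℤ, |(j : ℝ)| ≤ |(k : ℝ)| + 1 →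
      |Real.log (bd j)| ≤ Real.exp (|(k : ℝ)| + 1) :=
    fun j hj => (abs_log_bd_le j).trans (Real.exp_le_exp.2 hj)
  have hk1 := hlog (k - 1) (by push_cast; linarith [abs_sub (k : ℝ) 1, abs_one (α := ℝ)])
  have hk := hlog k (by linarith)
  rintro y ⟨hy1, hy2⟩
  constructor
  · refine lt_of_le_of_lt ?_ hy1
    rw [one_div, ← Real.exp_neg, ← Real.exp_log (bd_pos (k - 1))]
    gcongr
    linarith [neg_abs_le (Real.log (bd (k - 1)))]
  · refine hy2.trans ?_
    rw [← Real.exp_log (bd_pos k)]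
    gcongr
    linarith [le_abs_self (Real.log (bd k))]

lemma lintegral_Ioc_le_log_mul_iSup (g : ℝ → ℝ≥0∞) {R : ℝ} (hR : Real.exp 1 < R) :
    ∫⁻ y in Set.Ioc (1 / R) R, g y ≤ ENNReal.ofReal (Real.log R) *
      ⨆ R : {R : ℝ // Real.exp 1 < R},
        ENNReal.ofReal (1 / Real.log R) * ∫⁻ y in Set.Ioc (1 / (R : ℝ)) (R : ℝ), g y := by
  have hlog : 0 < Real.log R := Real.log_pos ((Real.one_lt_exp_iff.2 one_pos).trans hR)
  calc ∫⁻ y in Set.Ioc (1 / R) R, g y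
      = ENNReal.ofReal (Real.log R) *
          (ENNReal.ofReal (1 / Real.log R) * ∫⁻ y in Set.Ioc (1 / R) R, g y) := by
        rw [← mul_assoc, ← ENNReal.ofReal_mul hlog.le, mul_one_div_cancel hlog.ne',
          ENNReal.ofReal_one, one_mul]
    _ ≤ _ := by
        gcongr
        exact le_iSup (fun R : {R : ℝ // Real.exp 1 < R} =>
          ENNReal.ofReal (1 / Real.log R) * ∫⁻ y in Set.Ioc (1 / (R : ℝ)) (R : ℝ), g y)
          ⟨R, hR⟩

lemma ofReal_exp_mul_lintegral_Ioc_bd_le (g : ℝ → ℝ≥0∞) (k : ℤ) {t : ℝ} (ht : 0 ≤ t) :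
    ENNReal.ofReal (Real.exp ((|(k : ℝ)| - 1) * t)) *
        ∫⁻ y in Set.Ioc (bd (k - 1)) (bd k), g y ≤
      ∫⁻ y in Set.Ioc (bd (k - 1)) (bd k), ENNReal.ofReal ((1 + |Real.log y|) ^ t) * g y := by
  rw [← lintegral_const_mul' _ _ ENNReal.ofReal_ne_top]
  refine setLIntegral_mono' measurableSet_Ioc fun y hy => ?_
  rw [Real.exp_mul]
  gcongr
  exact exp_abs_sub_one_le_one_add_abs_log hy

lemma lintegral_Ioc_bd_le_ofReal_exp_mul (g : ℝ → ℝ≥0∞) (k : ℤ) {t : ℝ} (ht : t ≤ 0) :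
    ∫⁻ y in Set.Ioc (bd (k - 1)) (bd k), ENNReal.ofReal ((1 + |Real.log y|) ^ t) * g y ≤
      ENNReal.ofReal (Real.exp ((|(k : ℝ)| - 1) * t)) *
        ∫⁻ y in Set.Ioc (bd (k - 1)) (bd k), g y := by
  rw [← lintegral_const_mul' _ _ ENNReal.ofReal_ne_top]
  refine setLIntegral_mono' measurableSet_Ioc fun y hy => ?_
  rw [Real.exp_mul]
  gcongr ENNReal.ofReal ?_ * _
  exact Real.rpow_le_rpow_of_nonpos (Real.exp_pos _) (exp_abs_sub_one_le_one_add_abs_log hy) ht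

lemma ENNReal.tsum_rpow_half_mul_le {ι : Type*} (a b : ι → ℝ≥0∞) :
    ∑' i, (a i * b i) ^ (1 / 2 : ℝ) ≤
      (∑' i, a i) ^ (1 / 2 : ℝ) * (∑' i, b i) ^ (1 / 2 : ℝ) := by
  let _ : MeasurableSpace ι := ⊤
  have h := ENNReal.lintegral_mul_le_Lp_mul_Lq Measure.count Real.HolderConjugate.two_two
    (f := fun i => a i ^ (1 / 2 : ℝ)) (g := fun i => b i ^ (1 / 2 : ℝ))
    measurable_from_top.aemeasurable measurable_from_top.aemeasurable
  have hsq : ∀ x : ℝ≥0∞, (x ^ (1 / 2 : ℝ)) ^ (2 : ℝ) = x := fun x => by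
    rw [← ENNReal.rpow_mul]; norm_num
  simp only [lintegral_count, Pi.mul_apply, hsq] at h
  simpa only [ENNReal.mul_rpow_of_nonneg _ _ (by norm_num : (0 : ℝ) ≤ 1 / 2)] using h

noncomputable def besovConst (s : ℝ) : ℝ≥0∞ :=
  ∑' k : ℤ, ENNReal.ofReal (Real.exp (|(k : ℝ)| + 1 - 2 * s * (|(k : ℝ)| - 1)))

lemma besovConst_pos (s : ℝ) : 0 < besovConst s :=
  (ENNReal.ofReal_pos.2 (Real.exp_pos _)).trans_le (ENNReal.le_tsum 0)

lemma besovConst_ne_top {s : ℝ} (hs : 1 / 2 < s) : besovConst s ≠ ⊤ := by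
  have hnat : Summable fun n : ℕ => Real.exp (n + 1 - 2 * s * (n - 1)) := by
    refine ((Real.summable_exp_nat_mul_iff.2 (by linarith : 1 - 2 * s < 0)).mul_right
      (Real.exp (1 + 2 * s))).congr fun n => ?_
    rw [← Real.exp_add]
    ring_nf
  have hint : Summable fun k : ℤ => Real.exp (|(k : ℝ)| + 1 - 2 * s * (|(k : ℝ)| - 1)) :=
    Summable.of_nat_of_neg (by simpa using hnat) (by simpa using hnat)
  rw [besovConst, ← ENNReal.ofReal_tsum_of_nonneg (fun _ => (Real.exp_pos _).le) hint]
  exact ENNReal.ofReal_ne_top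

theorem tsum_ofReal_exp_mul_sqrt_lintegral_Ioc_bd_le (g : ℝ → ℝ≥0∞) {s : ℝ} (hs : 0 ≤ s) :
    ∑' k : ℤ, ENNReal.ofReal (Real.exp ((|k| : ℤ) / 2 : ℝ)) *
        (∫⁻ y in Set.Ioc (bd (k - 1)) (bd k), g y) ^ ((1 : ℝ) / 2) ≤
      besovConst s ^ ((1 : ℝ) / 2) *
        (∫⁻ y in Set.Ioi 0, ENNReal.ofReal ((1 + |Real.log y|) ^ (2 * s)) * g y) ^
          ((1 : ℝ) / 2) := by
  rw [lintegral_Ioi_zero_eq_tsum_Ioc_bd]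
  refine le_trans (ENNReal.tsum_le_tsum fun k => ?_) (ENNReal.tsum_rpow_half_mul_le _ _)
  have hsqrt : ENNReal.ofReal (Real.exp ((|k| : ℤ) / 2 : ℝ)) =
      ENNReal.ofReal (Real.exp |(k : ℝ)|) ^ ((1 : ℝ) / 2) := by
    rw [ENNReal.ofReal_rpow_of_nonneg (Real.exp_pos _).le (by norm_num), ← Real.exp_mul]
    push_cast
    ring_nf
  rw [hsqrt, ← ENNReal.mul_rpow_of_nonneg _ _ (by norm_num)]
  refine ENNReal.rpow_le_rpow ?_ (by norm_num)
  calc ENNReal.ofReal (Real.exp |(k : ℝ)|) * ∫⁻ y in Set.Ioc (bd (k - 1)) (bd k), g y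
      ≤ ENNReal.ofReal (Real.exp (|(k : ℝ)| + 1)) *
          ∫⁻ y in Set.Ioc (bd (k - 1)) (bd k), g y := by
        gcongr
        linarith
    _ = ENNReal.ofReal (Real.exp (|(k : ℝ)| + 1 - 2 * s * (|(k : ℝ)| - 1))) *
          (ENNReal.ofReal (Real.exp ((|(k : ℝ)| - 1) * (2 * s))) *
            ∫⁻ y in Set.Ioc (bd (k - 1)) (bd k), g y) := by
        rw [← mul_assoc, ← ENNReal.ofReal_mul (Real.exp_pos _).le, ← Real.exp_add]
        ring_nf
    _ ≤ _ := by
        gcongr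
        exact ofReal_exp_mul_lintegral_Ioc_bd_le g k (by positivity)

theorem lintegral_ofReal_rpow_neg_mul_le_besovConst_mul_iSup (g : ℝ → ℝ≥0∞) {s : ℝ}
    (hs : 0 ≤ s) :
    ∫⁻ y in Set.Ioi 0, ENNReal.ofReal ((1 + |Real.log y|) ^ (2 * -s)) * g y ≤
      besovConst s * ⨆ R : {R : ℝ // Real.exp 1 < R},
        ENNReal.ofReal (1 / Real.log R) * ∫⁻ y in Set.Ioc (1 / (R : ℝ)) (R : ℝ), g y := by
  rw [lintegral_Ioi_zero_eq_tsum_Ioc_bd, besovConst, ← ENNReal.tsum_mul_right]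
  refine ENNReal.tsum_le_tsum fun k => ?_
  have hR : Real.exp 1 < Real.exp (Real.exp (|(k : ℝ)| + 1)) :=
    Real.exp_lt_exp.2 (Real.one_lt_exp_iff.2 (by positivity))
  calc _ ≤ ENNReal.ofReal (Real.exp ((|(k : ℝ)| - 1) * (2 * -s))) *
          ∫⁻ y in Set.Ioc (bd (k - 1)) (bd k), g y :=
        lintegral_Ioc_bd_le_ofReal_exp_mul g k (by linarith)
    _ ≤ ENNReal.ofReal (Real.exp ((|(k : ℝ)| - 1) * (2 * -s))) *
          (ENNReal.ofReal (Real.log (Real.exp (Real.exp (|(k : ℝ)| + 1)))) *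
            ⨆ R : {R : ℝ // Real.exp 1 < R},
              ENNReal.ofReal (1 / Real.log R) *
                ∫⁻ y in Set.Ioc (1 / (R : ℝ)) (R : ℝ), g y) := by
        gcongr
        exact (lintegral_mono_set (Ioc_bd_subset k)).trans (lintegral_Ioc_le_log_mul_iSup g hR)
    _ = _ := by
        rw [Real.log_exp, ← mul_assoc, ← ENNReal.ofReal_mul (Real.exp_pos _).le,
          ← Real.exp_add]
        ring_nf

/-- The continuous inclusions `L^{2,s} ⊂ B` and `B* ⊂ L^{2,-s}` for `s > 1/2`. -/
theorem besov_inclusions {E : Type*} [NormedAddCommGroup E] (s : ℝ) (hs : 1 / 2 < s) :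
    ∃ C : ℝ≥0∞, 0 < C ∧ C ≠ ⊤ ∧
      (∀ f : ℝ → E, Bnorm f ≤ C * Lnorm s f) ∧
      (∀ u : ℝ → E, Lnorm (-s) u ≤ C * Bstarnorm u) := by
  have hs0 : 0 ≤ s := by linarith
  refine ⟨besovConst s ^ ((1 : ℝ) / 2),
    ENNReal.rpow_pos (besovConst_pos s) (besovConst_ne_top hs),
    ENNReal.rpow_ne_top_of_nonneg (by norm_num) (besovConst_ne_top hs), fun f => ?_, fun u => ?_⟩
  · simpa only [Bnorm, Lnorm, mul_div_assoc] using
      tsum_ofReal_exp_mul_sqrt_lintegral_Ioc_bd_le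
        (fun y => (‖f y‖₊ : ℝ≥0∞) ^ 2 / ENNReal.ofReal (y ^ 2)) hs0
  · simp only [Lnorm, Bstarnorm, mul_div_assoc]
    rw [← ENNReal.mul_rpow_of_nonneg _ _ (by norm_num)]
    gcongr
    exact lintegral_ofReal_rpow_neg_mul_le_besovConst_mul_iSup _ hs0
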